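/- Let h : G → G' and k : G' → G'' be homomorphisms between finite groups. Then for every G''-transfer system ⇝, one has h⁻¹_L(k⁻¹_L(⇝)) = (k∘h)⁻¹_L(⇝), where for a homomorphism f : A → B, f⁻¹_L(⇝) denotes the A-transfer system generated by the preimage pairs {(f⁻¹(K'), f⁻¹(H')) : K' ⇝ H'}. -/
import Mathlib


/-- Conjugation of a subgroup: `gKg⁻¹`. -/
def conjSub {G : Type*} [Group G] (g : G) (K : Subgroup G) : Subgroup G :=
  Subgroup.map (MulAut.conj g).toMonoidHom K

/-- A `G`-transfer system: a partial order on subgroups refining inclusion,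
closed under conjugation and restriction. -/
def IsTransferSystem {G : Type*} [Group G] (R : Subgroup G → Subgroup G → Prop) : Prop :=
  (∀ H, R H H) ∧
  (∀ ⦃K H⦄, R K H → R H K → K = H) ∧
  (∀ ⦃K J H⦄, R K J → R J H → R K H) ∧
  (∀ ⦃K H⦄, R K H → K ≤ H) ∧
  (∀ ⦃K H⦄ (g : G), R K H → R (conjSub g K) (conjSub g H)) ∧
  (∀ ⦃K H⦄, R K H → ∀ ⦃L⦄, L ≤ H → R (L ⊓ K) L)

/-- `TL` is the transfer system generated by the relation `R`:
the least transfer system containing `R`. -/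
def IsGenBy {G : Type*} [Group G] (TL R : Subgroup G → Subgroup G → Prop) : Prop :=
  IsTransferSystem TL ∧ (∀ K H, R K H → TL K H) ∧
    ∀ T, IsTransferSystem T → (∀ K H, R K H → T K H) → ∀ K H, TL K H → T K H

lemma mem_conjSub {G : Type*} [Group G] {g x : G} {K : Subgroup G} :
    x ∈ conjSub g K ↔ g⁻¹ * x * g ∈ K := by
  simp only [conjSub, Subgroup.mem_map, MulEquiv.coe_toMonoidHom, MulAut.conj_apply]
  constructor
  · rintro ⟨y, hy, rfl⟩; simpa [mul_assoc] using hy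
  · intro hx; exact ⟨g⁻¹ * x * g, hx, by group⟩

lemma conjSub_one {G : Type*} [Group G] (K : Subgroup G) : conjSub 1 K = K := by
  ext x; simp [mem_conjSub]

lemma conjSub_conjSub {G : Type*} [Group G] (g g' : G) (K : Subgroup G) :
    conjSub g' (conjSub g K) = conjSub (g' * g) K := by
  ext x; simp [mem_conjSub, mul_assoc]

lemma conjSub_inf {G : Type*} [Group G] (g : G) (K L : Subgroup G) :
    conjSub g (K ⊓ L) = conjSub g K ⊓ conjSub g L := by
  ext x; simp [mem_conjSub]

lemma conjSub_mono {G : Type*} [Group G] (g : G) {K L : Subgroup G} (hKL : K ≤ L) :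
    conjSub g K ≤ conjSub g L := fun x hx => mem_conjSub.2 (hKL (mem_conjSub.1 hx))

lemma conjSub_comap {G G' : Type*} [Group G] [Group G'] (k : G →* G') (g : G)
    (K : Subgroup G') : conjSub g (K.comap k) = (conjSub (k g) K).comap k := by
  ext x; simp [mem_conjSub, Subgroup.mem_comap, map_mul, map_inv]

theorem stmt16 {G G' G'' : Type*} [Group G] [Group G'] [Group G'']
    [Finite G] [Finite G'] [Finite G'']
    (h : G →* G') (k : G' →* G'')
    (W : Subgroup G'' → Subgroup G'' → Prop) (hW : IsTransferSystem W)
    (TL1 : Subgroup G' → Subgroup G' → Prop)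
    (hTL1 : IsGenBy TL1 (fun A B => ∃ K' H' : Subgroup G'', W K' H' ∧
      A = K'.comap k ∧ B = H'.comap k))
    (TL2 : Subgroup G → Subgroup G → Prop)
    (hTL2 : IsGenBy TL2 (fun A B => ∃ A' B' : Subgroup G', TL1 A' B' ∧
      A = A'.comap h ∧ B = B'.comap h))
    (TL3 : Subgroup G → Subgroup G → Prop)
    (hTL3 : IsGenBy TL3 (fun A B => ∃ K' H' : Subgroup G'', W K' H' ∧
      A = K'.comap (k.comp h) ∧ B = H'.comap (k.comp h))) :
    ∀ A B, TL2 A B ↔ TL3 A B := by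
  obtain ⟨_, _, _, wle, wconj, _⟩ := hW
  obtain ⟨hT1sys, hT1gen, hT1min⟩ := hTL1
  obtain ⟨hT2sys, hT2gen, hT2min⟩ := hTL2
  obtain ⟨hT3sys, hT3gen, hT3min⟩ := hTL3
  obtain ⟨r3refl, r3anti, r3trans, r3le, r3conj, r3res⟩ := hT3sys
  -- the auxiliary relation on subgroups of G'
  set T1 : Subgroup G' → Subgroup G' → Prop := fun A' B' =>
    A' ≤ B' ∧ ∀ g' : G', TL3 ((conjSub g' A').comap h) ((conjSub g' B').comap h) with hT1def
  have T1sys : IsTransferSystem T1 := by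
    refine ⟨fun H => ⟨le_rfl, fun g' => r3refl _⟩,
      fun K H h1 h2 => le_antisymm h1.1 h2.1,
      fun K J H h1 h2 => ⟨h1.1.trans h2.1, fun g' => r3trans (h1.2 g') (h2.2 g')⟩,
      fun K H h1 => h1.1, ?_, ?_⟩
    · intro K H g h1
      refine ⟨conjSub_mono g h1.1, fun g' => ?_⟩
      rw [conjSub_conjSub, conjSub_conjSub]
      exact h1.2 (g' * g)
    · intro K H h1 L hL
      refine ⟨inf_le_left, fun g' => ?_⟩
      have hres := r3res (h1.2 g')
        (L := (conjSub g' L).comap h) (Subgroup.comap_mono (conjSub_mono g' hL))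
      rwa [← Subgroup.comap_inf, ← conjSub_inf] at hres
  have T1cont : ∀ A' B', (∃ K' H' : Subgroup G'', W K' H' ∧
      A' = K'.comap k ∧ B' = H'.comap k) → T1 A' B' := by
    rintro _ _ ⟨K', H', hw, rfl, rfl⟩
    refine ⟨Subgroup.comap_mono (wle hw), fun g' => ?_⟩
    apply hT3gen
    exact ⟨conjSub (k g') K', conjSub (k g') H', wconj (k g') hw,
      by rw [conjSub_comap, Subgroup.comap_comap], by rw [conjSub_comap, Subgroup.comap_comap]⟩
  have key : ∀ A' B', TL1 A' B' → TL3 (A'.comap h) (B'.comap h) := by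
    intro A' B' hab
    have := (hT1min T1 T1sys T1cont A' B' hab).2 1
    rwa [conjSub_one, conjSub_one] at this
  intro A B
  constructor
  · refine hT2min TL3 ⟨r3refl, r3anti, r3trans, r3le, r3conj, r3res⟩ ?_ A B
    rintro _ _ ⟨A', B', hab, rfl, rfl⟩
    exact key A' B' hab
  · refine hT3min TL2 hT2sys ?_ A B
    rintro _ _ ⟨K', H', hw, rfl, rfl⟩
    refine hT2gen _ _ ⟨K'.comap k, H'.comap k, hT1gen _ _ ⟨K', H', hw, rfl, rfl⟩,
      (Subgroup.comap_comap K' k h).symm, (Subgroup.comap_comap H' k h).symm⟩
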